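/- One-step contraction for Riemannian gradient descent on matrices: let A satisfy rank-2r RIP with constant δ, T a rank-r matrix, y = A(T), T_l a rank-r iterate with tangent-space projector P_l, α_l = ‖P_l G_l‖_F²/‖A P_l G_l‖₂² with G_l = A*(A T_l − y), and T_{l+1} = H_r(T_l − α_l P_l G_l) with H_r a map satisfying ‖W − H_r(W)‖_F ≤ √2‖W − T‖_F for all W. Then ‖T_{l+1} − T‖_F ≤ (√2+1)·( 2δ/(1−δ) + (1 + (1+δ)/(1−δ))·‖T−T_l‖_F/σ_r(T) )·‖T_l − T‖_F ≤ (√2+1)( 2δ/(1−δ)·‖T_l−T‖_F + (1 + 1/(1−δ)·(1+δ))·‖T−T_l‖_F²/σ_r(T) ). -/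

import Mathlib

open Matrix
open scoped RealInnerProductSpace

noncomputable def frobNorm {p q : ℕ} (A : Matrix (Fin p) (Fin q) ℝ) : ℝ :=
  Real.sqrt (∑ i, ∑ j, (A i j) ^ 2)

noncomputable def frobInner {p q : ℕ} (A B : Matrix (Fin p) (Fin q) ℝ) : ℝ :=
  (Aᵀ * B).trace

/-!
Put `x = T_l - T`, so that `G = A*A x`, and let `P` be the tangent-space projector at `T_l`. The
step error splits as
`W - T = x - α P A*A x = (P x - α P A*A P x) - (P x - x) + α P A*A (P x - x)`.
RIP on the tangent space pins the quadratic form of `P A*A P` between `(1 - δ)` and `(1 + δ)`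
times `‖P X‖²`, and the step size `α` lies in `[1/(1+δ), 1/(1-δ)]`, so the first term is at most
`2δ/(1-δ) ‖x‖`. The other two are at most `(1 + (1+δ)/(1-δ)) ‖P x - x‖`. As `P T_l = T_l`,
`P x - x = T - P T = (1 - U_l U_lᵀ) T (1 - V_l V_lᵀ)`, which is quadratically small: it factors as
`((1 - U_l U_lᵀ) U C) (Vᵀ (1 - V_l V_lᵀ))`, each factor is bounded through `T - T_l`, and the
second one loses a factor `σ_r`. The quasi-projection property of `H_r` costs the final `√2 + 1`.
-/

theorem LinearMap.IsSymmetric.norm_apply_le_of_abs_inner_le {E : Type*} [NormedAddCommGroup E]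
    [InnerProductSpace ℝ E] [FiniteDimensional ℝ E] {M : E →ₗ[ℝ] E} (hM : M.IsSymmetric)
    {c : ℝ} (hc : 0 ≤ c) (h : ∀ x, |⟪M x, x⟫| ≤ c * ‖x‖ ^ 2) (x : E) : ‖M x‖ ≤ c * ‖x‖ := by
  set T := LinearMap.toContinuousLinearMap M
  have hT : ‖T‖ ≤ c := by
    rw [T.norm_eq_iSup_rayleighQuotient hM]
    refine ciSup_le fun y => ?_
    rw [ContinuousLinearMap.rayleighQuotient, ContinuousLinearMap.reApplyInnerSelf_apply,
      abs_div, abs_sq]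
    exact div_le_of_le_mul₀ (sq_nonneg _) hc (h y)
  exact (T.le_opNorm x).trans (by gcongr)

section Frobenius

variable {p q k : ℕ}

noncomputable def frobEquiv : Matrix (Fin p) (Fin q) ℝ ≃ₗ[ℝ] EuclideanSpace ℝ (Fin p × Fin q) where
  toFun X := WithLp.toLp 2 fun ij => X ij.1 ij.2
  invFun x := Matrix.of fun i j => x (i, j)
  map_add' _ _ := rfl
  map_smul' _ _ := rfl
  left_inv _ := rfl
  right_inv _ := rfl

@[simp]
theorem frobEquiv_apply (X : Matrix (Fin p) (Fin q) ℝ) (ij : Fin p × Fin q) :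
    frobEquiv X ij = X ij.1 ij.2 :=
  rfl

theorem frobInner_eq_sum (X Y : Matrix (Fin p) (Fin q) ℝ) :
    frobInner X Y = ∑ i, ∑ j, X i j * Y i j := by
  simp only [frobInner, trace, diag, mul_apply, transpose_apply]
  exact Finset.sum_comm

theorem inner_frobEquiv (X Y : Matrix (Fin p) (Fin q) ℝ) :
    ⟪frobEquiv X, frobEquiv Y⟫ = frobInner X Y := by
  simp [frobInner_eq_sum, PiLp.inner_apply, Fintype.sum_prod_type, mul_comm]

theorem norm_frobEquiv (X : Matrix (Fin p) (Fin q) ℝ) : ‖frobEquiv X‖ = frobNorm X := by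
  simp [EuclideanSpace.norm_eq, frobNorm, Fintype.sum_prod_type]

theorem frobNorm_nonneg (X : Matrix (Fin p) (Fin q) ℝ) : 0 ≤ frobNorm X :=
  Real.sqrt_nonneg _

theorem frobNorm_sq (X : Matrix (Fin p) (Fin q) ℝ) : frobNorm X ^ 2 = ∑ i, ∑ j, X i j ^ 2 :=
  Real.sq_sqrt (by positivity)

theorem frobNorm_eq_sqrt_frobInner (X : Matrix (Fin p) (Fin q) ℝ) :
    frobNorm X = √(frobInner X X) := by
  rw [frobInner_eq_sum, frobNorm]
  simp only [sq]

theorem frobInner_self (X : Matrix (Fin p) (Fin q) ℝ) : frobInner X X = frobNorm X ^ 2 := by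
  rw [← inner_frobEquiv, ← norm_frobEquiv, real_inner_self_eq_norm_sq]

theorem frobInner_comm (X Y : Matrix (Fin p) (Fin q) ℝ) : frobInner X Y = frobInner Y X := by
  rw [← inner_frobEquiv, ← inner_frobEquiv, real_inner_comm]

theorem frobInner_le (X Y : Matrix (Fin p) (Fin q) ℝ) :
    frobInner X Y ≤ frobNorm X * frobNorm Y := by
  simpa only [inner_frobEquiv, norm_frobEquiv] using real_inner_le_norm (frobEquiv X) (frobEquiv Y)

theorem frobNorm_add_le (X Y : Matrix (Fin p) (Fin q) ℝ) :
    frobNorm (X + Y) ≤ frobNorm X + frobNorm Y := by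
  simpa only [← map_add, norm_frobEquiv] using norm_add_le (frobEquiv X) (frobEquiv Y)

theorem frobNorm_sub_le (X Y : Matrix (Fin p) (Fin q) ℝ) :
    frobNorm (X - Y) ≤ frobNorm X + frobNorm Y := by
  simpa only [← map_sub, norm_frobEquiv] using norm_sub_le (frobEquiv X) (frobEquiv Y)

theorem frobNorm_smul (c : ℝ) (X : Matrix (Fin p) (Fin q) ℝ) :
    frobNorm (c • X) = |c| * frobNorm X := by
  rw [← norm_frobEquiv, map_smul, norm_smul, Real.norm_eq_abs, norm_frobEquiv]

theorem frobNorm_sub_comm (X Y : Matrix (Fin p) (Fin q) ℝ) :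
    frobNorm (X - Y) = frobNorm (Y - X) := by
  simp only [← norm_frobEquiv, map_sub, norm_sub_rev]

theorem frobInner_add_left (X Y Z : Matrix (Fin p) (Fin q) ℝ) :
    frobInner (X + Y) Z = frobInner X Z + frobInner Y Z := by
  simp only [frobInner, transpose_add, Matrix.add_mul, trace_add]

theorem frobInner_sub_left (X Y Z : Matrix (Fin p) (Fin q) ℝ) :
    frobInner (X - Y) Z = frobInner X Z - frobInner Y Z := by
  simp only [frobInner, transpose_sub, Matrix.sub_mul, trace_sub]

theorem frobInner_add_right (X Y Z : Matrix (Fin p) (Fin q) ℝ) :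
    frobInner X (Y + Z) = frobInner X Y + frobInner X Z := by
  simp only [frobInner, Matrix.mul_add, trace_add]

theorem frobInner_sub_right (X Y Z : Matrix (Fin p) (Fin q) ℝ) :
    frobInner X (Y - Z) = frobInner X Y - frobInner X Z := by
  simp only [frobInner, Matrix.mul_sub, trace_sub]

theorem frobInner_smul_left (c : ℝ) (X Y : Matrix (Fin p) (Fin q) ℝ) :
    frobInner (c • X) Y = c * frobInner X Y := by
  simp only [frobInner, transpose_smul, Matrix.smul_mul, trace_smul, smul_eq_mul]

theorem frobInner_mul_left (S : Matrix (Fin p) (Fin k) ℝ) (X : Matrix (Fin k) (Fin q) ℝ)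
    (Y : Matrix (Fin p) (Fin q) ℝ) :
    frobInner (S * X) Y = frobInner X (Sᵀ * Y) := by
  simp only [frobInner, transpose_mul, Matrix.mul_assoc]

theorem frobInner_mul_right (X : Matrix (Fin p) (Fin k) ℝ) (S : Matrix (Fin k) (Fin q) ℝ)
    (Y : Matrix (Fin p) (Fin q) ℝ) :
    frobInner (X * S) Y = frobInner X (Y * Sᵀ) := by
  simp only [frobInner, transpose_mul, Matrix.mul_assoc]
  rw [trace_mul_comm, Matrix.mul_assoc]

section
attribute [local instance] Matrix.frobeniusNormedAddCommGroup

theorem frobNorm_eq_norm (X : Matrix (Fin p) (Fin q) ℝ) : frobNorm X = ‖X‖ := by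
  simp [frobNorm, Matrix.frobenius_norm_def, Real.sqrt_eq_rpow]

theorem frobNorm_mul_le (X : Matrix (Fin p) (Fin q) ℝ) (Y : Matrix (Fin q) (Fin k) ℝ) :
    frobNorm (X * Y) ≤ frobNorm X * frobNorm Y := by
  simpa only [frobNorm_eq_norm] using Matrix.frobenius_norm_mul X Y

end

theorem frobNorm_apply_le_of_abs_frobInner_le
    {M : Matrix (Fin p) (Fin q) ℝ →ₗ[ℝ] Matrix (Fin p) (Fin q) ℝ}
    (hM : ∀ X Y, frobInner (M X) Y = frobInner X (M Y)) {c : ℝ} (hc : 0 ≤ c)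
    (h : ∀ X, |frobInner (M X) X| ≤ c * frobNorm X ^ 2) (X : Matrix (Fin p) (Fin q) ℝ) :
    frobNorm (M X) ≤ c * frobNorm X := by
  have hconj : ∀ Y, frobEquiv.conj M (frobEquiv Y) = frobEquiv (M Y) := by
    simp [LinearEquiv.conj_apply]
  have hsymm : (frobEquiv.conj M).IsSymmetric := by
    intro x y
    obtain ⟨X, rfl⟩ := frobEquiv.surjective x
    obtain ⟨Y, rfl⟩ := frobEquiv.surjective y
    simp only [hconj, inner_frobEquiv, hM]
  have key := hsymm.norm_apply_le_of_abs_inner_le hc (fun x => ?_) (frobEquiv X)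
  · rwa [hconj, norm_frobEquiv, norm_frobEquiv] at key
  · obtain ⟨Y, rfl⟩ := frobEquiv.surjective x
    rw [hconj, inner_frobEquiv, norm_frobEquiv]
    exact h Y

theorem frobNorm_apply_le_of_symm_of_idem (f : Matrix (Fin p) (Fin q) ℝ → Matrix (Fin p) (Fin q) ℝ)
    (hsymm : ∀ X Y, frobInner (f X) Y = frobInner X (f Y)) (hidem : ∀ X, f (f X) = f X)
    (X : Matrix (Fin p) (Fin q) ℝ) : frobNorm (f X) ≤ frobNorm X := by
  have h : frobNorm (f X) ^ 2 ≤ frobNorm X * frobNorm (f X) := by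
    rw [← frobInner_self, hsymm, hidem]
    exact frobInner_le X (f X)
  nlinarith [frobNorm_nonneg X, frobNorm_nonneg (f X)]

theorem frobNorm_proj_mul_le {S : Matrix (Fin p) (Fin p) ℝ} (hS : Sᵀ = S)
    (hSS : IsIdempotentElem S) (X : Matrix (Fin p) (Fin q) ℝ) : frobNorm (S * X) ≤ frobNorm X :=
  frobNorm_apply_le_of_symm_of_idem (S * ·)
    (fun X Y => by rw [frobInner_mul_left, hS]) (fun X => by rw [← Matrix.mul_assoc, hSS.eq]) X

theorem frobNorm_mul_proj_le {S : Matrix (Fin q) (Fin q) ℝ} (hS : Sᵀ = S)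
    (hSS : IsIdempotentElem S) (X : Matrix (Fin p) (Fin q) ℝ) : frobNorm (X * S) ≤ frobNorm X :=
  frobNorm_apply_le_of_symm_of_idem (· * S)
    (fun X Y => by rw [frobInner_mul_right, hS]) (fun X => by rw [Matrix.mul_assoc, hSS.eq]) X

theorem frobNorm_orthonormal_mul {U : Matrix (Fin p) (Fin k) ℝ} (hU : Uᵀ * U = 1)
    (X : Matrix (Fin k) (Fin q) ℝ) : frobNorm (U * X) = frobNorm X := by
  rw [frobNorm_eq_sqrt_frobInner, frobNorm_eq_sqrt_frobInner, frobInner_mul_left,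
    ← Matrix.mul_assoc, hU, Matrix.one_mul]

theorem frobNorm_mul_transpose_orthonormal {V : Matrix (Fin q) (Fin k) ℝ}
    (hV : Vᵀ * V = 1) (X : Matrix (Fin p) (Fin k) ℝ) : frobNorm (X * Vᵀ) = frobNorm X := by
  rw [frobNorm_eq_sqrt_frobInner, frobNorm_eq_sqrt_frobInner, frobInner_mul_right,
    transpose_transpose, Matrix.mul_assoc, hV, Matrix.mul_one]

theorem frobNorm_sq_eq_sum_col (Y : Matrix (Fin p) (Fin q) ℝ) :
    frobNorm Y ^ 2 = ∑ j, frobNorm (replicateCol (Fin 1) (Y.col j)) ^ 2 := by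
  simp only [frobNorm_sq]
  simp [Finset.sum_comm (γ := Fin p), col]

theorem mul_frobNorm_le_frobNorm_mul {σ : ℝ} {C : Matrix (Fin p) (Fin q) ℝ}
    (h : ∀ v : Matrix (Fin q) (Fin 1) ℝ, σ * frobNorm v ≤ frobNorm (C * v))
    (Y : Matrix (Fin q) (Fin k) ℝ) : σ * frobNorm Y ≤ frobNorm (C * Y) := by
  rcases le_or_gt σ 0 with hσ | hσ
  · exact (mul_nonpos_of_nonpos_of_nonneg hσ (frobNorm_nonneg Y)).trans (frobNorm_nonneg _)
  refine (pow_le_pow_iff_left₀ (mul_nonneg hσ.le (frobNorm_nonneg Y)) (frobNorm_nonneg _)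
    two_ne_zero).mp ?_
  rw [mul_pow, frobNorm_sq_eq_sum_col, frobNorm_sq_eq_sum_col, Finset.mul_sum]
  refine Finset.sum_le_sum fun j _ => ?_
  have hcol : replicateCol (Fin 1) ((C * Y).col j) = C * replicateCol (Fin 1) (Y.col j) := by
    rw [← replicateCol_mulVec]; rfl
  rw [hcol, ← mul_pow]
  exact pow_le_pow_left₀ (mul_nonneg hσ.le (frobNorm_nonneg _)) (h _) 2

end Frobenius

theorem abs_sub_mul_le_of_mem_Icc {δ α s a : ℝ} (hδ0 : 0 ≤ δ) (hδ1 : δ < 1)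
    (hα : α ∈ Set.Icc (1 / (1 + δ)) (1 / (1 - δ))) (hs : 0 ≤ s)
    (ha : a ∈ Set.Icc ((1 - δ) * s) ((1 + δ) * s)) : |s - α * a| ≤ 2 * δ / (1 - δ) * s := by
  obtain ⟨hαl, hαu⟩ := hα
  obtain ⟨hal, hau⟩ := ha
  have h1 : 1 ≤ α * (1 + δ) := by rwa [div_le_iff₀ (by linarith)] at hαl
  have h2 : α * (1 - δ) ≤ 1 := by rwa [le_div_iff₀ (by linarith)] at hαu
  have ha0 : 0 ≤ a := (mul_nonneg (by linarith) hs).trans hal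
  have key : |s - α * a| * (1 - δ) ≤ 2 * δ * s := by
    rw [← abs_of_pos (sub_pos.2 hδ1), ← abs_mul, abs_le]
    constructor <;> nlinarith [mul_le_mul_of_nonneg_right h1 ha0,
      mul_le_mul_of_nonneg_right h2 ha0, mul_nonneg hδ0 hs]
  rwa [div_mul_eq_mul_div, le_div_iff₀ (by linarith)]

theorem div_mem_Icc_of_mem_Icc {δ s a : ℝ} (hδ0 : 0 ≤ δ) (hδ1 : δ < 1) (ha : 0 < a)
    (hsa : a ∈ Set.Icc ((1 - δ) * s) ((1 + δ) * s)) :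
    s / a ∈ Set.Icc (1 / (1 + δ)) (1 / (1 - δ)) := by
  rw [Set.mem_Icc, div_le_div_iff₀ (by linarith) ha, div_le_div_iff₀ ha (by linarith)]
  constructor <;> linarith [hsa.1, hsa.2]

theorem isIdempotentElem_mul_transpose {p r : ℕ} {U : Matrix (Fin p) (Fin r) ℝ}
    (hU : Uᵀ * U = 1) : IsIdempotentElem (U * Uᵀ) := by
  rw [IsIdempotentElem, Matrix.mul_assoc, ← Matrix.mul_assoc Uᵀ, hU, Matrix.one_mul]

section TangentSpace

variable {n₁ n₂ r : ℕ} (Ul : Matrix (Fin n₁) (Fin r) ℝ) (Vl : Matrix (Fin n₂) (Fin r) ℝ)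

noncomputable def tangentProj : Matrix (Fin n₁) (Fin n₂) ℝ →ₗ[ℝ] Matrix (Fin n₁) (Fin n₂) ℝ where
  toFun Z := Ul * Ulᵀ * Z + Z * (Vl * Vlᵀ) - Ul * Ulᵀ * Z * (Vl * Vlᵀ)
  map_add' X Y := by simp only [Matrix.mul_add, Matrix.add_mul]; abel
  map_smul' c X := by simp only [Matrix.mul_smul, Matrix.smul_mul, smul_add, smul_sub,
    RingHom.id_apply]

theorem tangentProj_apply (Z : Matrix (Fin n₁) (Fin n₂) ℝ) :
    tangentProj Ul Vl Z = Ul * Ulᵀ * Z + Z * (Vl * Vlᵀ) - Ul * Ulᵀ * Z * (Vl * Vlᵀ) :=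
  rfl

theorem sub_tangentProj (Z : Matrix (Fin n₁) (Fin n₂) ℝ) :
    Z - tangentProj Ul Vl Z = (1 - Ul * Ulᵀ) * Z * (1 - Vl * Vlᵀ) := by
  simp only [tangentProj_apply, Matrix.sub_mul, Matrix.mul_sub, Matrix.one_mul, Matrix.mul_one]
  abel

theorem frobInner_tangentProj (X Y : Matrix (Fin n₁) (Fin n₂) ℝ) :
    frobInner (tangentProj Ul Vl X) Y = frobInner X (tangentProj Ul Vl Y) := by
  have hQ : (Ul * Ulᵀ)ᵀ = Ul * Ulᵀ := by rw [transpose_mul, transpose_transpose]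
  have hR : (Vl * Vlᵀ)ᵀ = Vl * Vlᵀ := by rw [transpose_mul, transpose_transpose]
  simp only [tangentProj_apply, frobInner_add_left, frobInner_sub_left, frobInner_add_right,
    frobInner_sub_right]
  rw [frobInner_mul_left, hQ, frobInner_mul_right, hR, frobInner_mul_right, hR,
    frobInner_mul_left, hQ]
  simp only [Matrix.mul_assoc]

theorem rank_tangentProj_le (Z : Matrix (Fin n₁) (Fin n₂) ℝ) :
    (tangentProj Ul Vl Z).rank ≤ 2 * r := by
  have h : tangentProj Ul Vl Z =
      fromCols Ul ((Z - Ul * Ulᵀ * Z) * Vl) * fromRows (Ulᵀ * Z) Vlᵀ := by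
    rw [fromCols_mul_fromRows, tangentProj_apply]
    simp only [Matrix.sub_mul, Matrix.mul_assoc]
    abel
  rw [h, two_mul]
  exact (rank_mul_le_left _ _).trans ((rank_le_card_width _).trans (by simp))

variable {Ul Vl}

theorem tangentProj_idem (hUl : Ulᵀ * Ul = 1) (hVl : Vlᵀ * Vl = 1)
    (Z : Matrix (Fin n₁) (Fin n₂) ℝ) :
    tangentProj Ul Vl (tangentProj Ul Vl Z) = tangentProj Ul Vl Z := by
  have hU : ∀ X : Matrix (Fin r) (Fin n₂) ℝ, Ulᵀ * (Ul * X) = X := fun X => by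
    rw [← Matrix.mul_assoc, hUl, Matrix.one_mul]
  have hV : ∀ X : Matrix (Fin r) (Fin n₂) ℝ, Vlᵀ * (Vl * X) = X := fun X => by
    rw [← Matrix.mul_assoc, hVl, Matrix.one_mul]
  simp only [tangentProj_apply, Matrix.mul_add, Matrix.add_mul, Matrix.mul_sub, Matrix.sub_mul,
    Matrix.mul_assoc, hU, hV]
  abel

theorem tangentProj_mul_mul (hUl : Ulᵀ * Ul = 1) (hVl : Vlᵀ * Vl = 1)
    (C : Matrix (Fin r) (Fin r) ℝ) : tangentProj Ul Vl (Ul * C * Vlᵀ) = Ul * C * Vlᵀ := by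
  have hU : Ulᵀ * (Ul * (C * Vlᵀ)) = C * Vlᵀ := by rw [← Matrix.mul_assoc, hUl, Matrix.one_mul]
  have hV : Vlᵀ * (Vl * Vlᵀ) = Vlᵀ := by rw [← Matrix.mul_assoc, hVl, Matrix.one_mul]
  simp only [tangentProj_apply, Matrix.mul_assoc, hU, hV]
  abel

end TangentSpace

theorem frobNorm_sub_tangentProj_le {n₁ n₂ r : ℕ} {U Ul : Matrix (Fin n₁) (Fin r) ℝ}
    {V Vl : Matrix (Fin n₂) (Fin r) ℝ} {C Cl : Matrix (Fin r) (Fin r) ℝ}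
    {T Tl : Matrix (Fin n₁) (Fin n₂) ℝ} {σ : ℝ} (hU : Uᵀ * U = 1) (hV : Vᵀ * V = 1)
    (hUl : Ulᵀ * Ul = 1) (hVl : Vlᵀ * Vl = 1) (hT : T = U * C * Vᵀ) (hTl : Tl = Ul * Cl * Vlᵀ)
    (hσpos : 0 < σ) (hσ : ∀ v : Matrix (Fin r) (Fin 1) ℝ, σ * frobNorm v ≤ frobNorm (C * v)) :
    frobNorm (T - tangentProj Ul Vl T) ≤ frobNorm (T - Tl) ^ 2 / σ := by
  have hQ : IsIdempotentElem (1 - Ul * Ulᵀ) := (isIdempotentElem_mul_transpose hUl).one_sub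
  have hR : IsIdempotentElem (1 - Vl * Vlᵀ) := (isIdempotentElem_mul_transpose hVl).one_sub
  have hQt : (1 - Ul * Ulᵀ)ᵀ = 1 - Ul * Ulᵀ := by simp [transpose_sub]
  have hRt : (1 - Vl * Vlᵀ)ᵀ = 1 - Vl * Vlᵀ := by simp [transpose_sub]
  -- Both one-sided projections annihilate `Tl`, so they only see `T - Tl`.
  have hQTl : (1 - Ul * Ulᵀ) * Tl = 0 := by
    rw [Matrix.sub_mul, Matrix.one_mul, sub_eq_zero, hTl]
    simp only [Matrix.mul_assoc]
    rw [← Matrix.mul_assoc Ulᵀ Ul, hUl, Matrix.one_mul]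
  have hTlR : Tl * (1 - Vl * Vlᵀ) = 0 := by
    rw [Matrix.mul_sub, Matrix.mul_one, sub_eq_zero, hTl]
    simp only [Matrix.mul_assoc]
    rw [← Matrix.mul_assoc Vlᵀ Vl, hVl, Matrix.one_mul]
  have hleft : frobNorm ((1 - Ul * Ulᵀ) * U * C) ≤ frobNorm (T - Tl) :=
    calc frobNorm ((1 - Ul * Ulᵀ) * U * C)
        = frobNorm ((1 - Ul * Ulᵀ) * U * C * Vᵀ) := (frobNorm_mul_transpose_orthonormal hV _).symm
      _ = frobNorm ((1 - Ul * Ulᵀ) * (T - Tl)) := by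
        rw [Matrix.mul_sub, hQTl, sub_zero, hT]; simp only [Matrix.mul_assoc]
      _ ≤ frobNorm (T - Tl) := frobNorm_proj_mul_le hQt hQ _
  have hright : σ * frobNorm (Vᵀ * (1 - Vl * Vlᵀ)) ≤ frobNorm (T - Tl) :=
    calc σ * frobNorm (Vᵀ * (1 - Vl * Vlᵀ))
        ≤ frobNorm (C * (Vᵀ * (1 - Vl * Vlᵀ))) := mul_frobNorm_le_frobNorm_mul hσ _
      _ = frobNorm (U * (C * (Vᵀ * (1 - Vl * Vlᵀ)))) := (frobNorm_orthonormal_mul hU _).symm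
      _ = frobNorm ((T - Tl) * (1 - Vl * Vlᵀ)) := by
        rw [Matrix.sub_mul, hTlR, sub_zero, hT]; simp only [Matrix.mul_assoc]
      _ ≤ frobNorm (T - Tl) := frobNorm_mul_proj_le hRt hR _
  calc frobNorm (T - tangentProj Ul Vl T)
      = frobNorm ((1 - Ul * Ulᵀ) * U * C * (Vᵀ * (1 - Vl * Vlᵀ))) := by
        rw [sub_tangentProj, hT]; simp only [Matrix.mul_assoc]
    _ ≤ frobNorm ((1 - Ul * Ulᵀ) * U * C) * frobNorm (Vᵀ * (1 - Vl * Vlᵀ)) :=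
        frobNorm_mul_le _ _
    _ ≤ frobNorm (T - Tl) * (frobNorm (T - Tl) / σ) :=
        mul_le_mul hleft (by rwa [le_div_iff₀' hσpos]) (frobNorm_nonneg _) (frobNorm_nonneg _)
    _ = frobNorm (T - Tl) ^ 2 / σ := by ring

section GradientStep

variable {p q : ℕ} {F : Type*} [NormedAddCommGroup F] [InnerProductSpace ℝ F]
  {A : Matrix (Fin p) (Fin q) ℝ →ₗ[ℝ] F} {Astar : F →ₗ[ℝ] Matrix (Fin p) (Fin q) ℝ}
  {P : Matrix (Fin p) (Fin q) ℝ →ₗ[ℝ] Matrix (Fin p) (Fin q) ℝ} {δ α : ℝ}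

theorem frobInner_proj_adjoint (hadj : ∀ X v, ⟪A X, v⟫ = frobInner (Astar v) X)
    (hPsymm : ∀ X Y, frobInner (P X) Y = frobInner X (P Y)) (X Y : Matrix (Fin p) (Fin q) ℝ) :
    frobInner (P (Astar (A X))) Y = ⟪A X, A (P Y)⟫ := by
  rw [hPsymm, ← hadj, real_inner_comm]

theorem frobInner_proj_eq_proj_proj (hPsymm : ∀ X Y, frobInner (P X) Y = frobInner X (P Y))
    (hPidem : ∀ X, P (P X) = P X) (X Y : Matrix (Fin p) (Fin q) ℝ) :
    frobInner (P X) Y = frobInner (P X) (P Y) := by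
  rw [hPsymm, hPsymm, hPidem]

theorem frobNorm_proj_sub_smul_le (hadj : ∀ X v, ⟪A X, v⟫ = frobInner (Astar v) X)
    (hPsymm : ∀ X Y, frobInner (P X) Y = frobInner X (P Y)) (hPidem : ∀ X, P (P X) = P X)
    (hRIP : ∀ X, (1 - δ) * frobNorm (P X) ^ 2 ≤ ‖A (P X)‖ ^ 2 ∧
      ‖A (P X)‖ ^ 2 ≤ (1 + δ) * frobNorm (P X) ^ 2)
    (hδ0 : 0 ≤ δ) (hδ1 : δ < 1) (hα : α ∈ Set.Icc (1 / (1 + δ)) (1 / (1 - δ)))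
    (X : Matrix (Fin p) (Fin q) ℝ) :
    frobNorm (P X - α • P (Astar (A (P X)))) ≤ 2 * δ / (1 - δ) * frobNorm X := by
  have hc : 0 ≤ 2 * δ / (1 - δ) := div_nonneg (by linarith) (by linarith)
  set M := P - α • (P ∘ₗ Astar ∘ₗ A ∘ₗ P)
  have hM : ∀ X Y, frobInner (M X) Y = frobInner (P X) (P Y) - α * ⟪A (P X), A (P Y)⟫ := by
    intro X Y
    rw [LinearMap.sub_apply, LinearMap.smul_apply, frobInner_sub_left, frobInner_smul_left,
      frobInner_proj_eq_proj_proj hPsymm hPidem]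
    simp only [LinearMap.comp_apply, frobInner_proj_adjoint hadj hPsymm]
  refine frobNorm_apply_le_of_abs_frobInner_le (M := M) (fun X Y => ?_) hc (fun Y => ?_) X
  · rw [hM, frobInner_comm X, hM, frobInner_comm (P Y), real_inner_comm]
  · rw [hM, frobInner_self, real_inner_self_eq_norm_sq]
    calc |frobNorm (P Y) ^ 2 - α * ‖A (P Y)‖ ^ 2|
        ≤ 2 * δ / (1 - δ) * frobNorm (P Y) ^ 2 :=
          abs_sub_mul_le_of_mem_Icc hδ0 hδ1 hα (sq_nonneg _) (hRIP Y)
      _ ≤ 2 * δ / (1 - δ) * frobNorm Y ^ 2 := by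
          gcongr
          exacts [frobNorm_nonneg _, frobNorm_apply_le_of_symm_of_idem P hPsymm hPidem Y]

theorem frobNorm_proj_adjoint_le (hadj : ∀ X v, ⟪A X, v⟫ = frobInner (Astar v) X)
    (hPsymm : ∀ X Y, frobInner (P X) Y = frobInner X (P Y)) (hPidem : ∀ X, P (P X) = P X)
    (hRIP : ∀ X, ‖A (P X)‖ ^ 2 ≤ (1 + δ) * frobNorm (P X) ^ 2) (hδ0 : 0 ≤ δ)
    {Z : Matrix (Fin p) (Fin q) ℝ} (hZ : ‖A Z‖ ^ 2 ≤ (1 + δ) * frobNorm Z ^ 2) :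
    frobNorm (P (Astar (A Z))) ≤ (1 + δ) * frobNorm Z := by
  set Y := P (Astar (A Z))
  have hAY : ‖A Y‖ ^ 2 ≤ (1 + δ) * frobNorm Y ^ 2 := hRIP _
  have hY : frobNorm Y ^ 2 ≤ ‖A Z‖ * ‖A Y‖ :=
    calc frobNorm Y ^ 2 = frobInner (P (Astar (A Z))) Y := (frobInner_self Y).symm
      _ = ⟪A Z, A Y⟫ := by rw [frobInner_proj_adjoint hadj hPsymm, hPidem]
      _ ≤ ‖A Z‖ * ‖A Y‖ := real_inner_le_norm _ _
  have hZ0 : 0 ≤ (1 + δ) * frobNorm Z := mul_nonneg (by linarith) (frobNorm_nonneg Z)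
  have hprod : ‖A Z‖ * ‖A Y‖ ≤ (1 + δ) * frobNorm Z * frobNorm Y := by
    refine (pow_le_pow_iff_left₀ (by positivity) (mul_nonneg hZ0 (frobNorm_nonneg Y))
      two_ne_zero).mp ?_
    calc (‖A Z‖ * ‖A Y‖) ^ 2 = ‖A Z‖ ^ 2 * ‖A Y‖ ^ 2 := mul_pow _ _ _
      _ ≤ ((1 + δ) * frobNorm Z ^ 2) * ((1 + δ) * frobNorm Y ^ 2) :=
          mul_le_mul hZ hAY (sq_nonneg _) (mul_nonneg (by linarith) (sq_nonneg _))
      _ = ((1 + δ) * frobNorm Z * frobNorm Y) ^ 2 := by ring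
  nlinarith [frobNorm_nonneg Y]

theorem frobNorm_sub_smul_proj_adjoint_le (hadj : ∀ X v, ⟪A X, v⟫ = frobInner (Astar v) X)
    (hPsymm : ∀ X Y, frobInner (P X) Y = frobInner X (P Y)) (hPidem : ∀ X, P (P X) = P X)
    (hRIP : ∀ X, (1 - δ) * frobNorm (P X) ^ 2 ≤ ‖A (P X)‖ ^ 2 ∧
      ‖A (P X)‖ ^ 2 ≤ (1 + δ) * frobNorm (P X) ^ 2)
    (hδ0 : 0 ≤ δ) (hδ1 : δ < 1) (hα : α ∈ Set.Icc (1 / (1 + δ)) (1 / (1 - δ)))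
    {X : Matrix (Fin p) (Fin q) ℝ} (hX : ‖A (P X - X)‖ ^ 2 ≤ (1 + δ) * frobNorm (P X - X) ^ 2)
    {ε : ℝ} (hε : frobNorm (P X - X) ≤ ε) :
    frobNorm (X - α • P (Astar (A X))) ≤
      2 * δ / (1 - δ) * frobNorm X + (1 + (1 + δ) / (1 - δ)) * ε := by
  set Z := P X - X with hZ
  have hα0 : 0 ≤ α := (div_nonneg zero_le_one (by linarith)).trans hα.1
  have hdecomp : X - α • P (Astar (A X)) =
      (P X - α • P (Astar (A (P X)))) - Z + α • P (Astar (A Z)) := by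
    simp only [hZ, map_sub]
    module
  have htangent := frobNorm_proj_sub_smul_le hadj hPsymm hPidem hRIP hδ0 hδ1 hα X
  have hnormal : α * frobNorm (P (Astar (A Z))) ≤ (1 + δ) / (1 - δ) * frobNorm Z :=
    calc α * frobNorm (P (Astar (A Z))) ≤ α * ((1 + δ) * frobNorm Z) :=
          mul_le_mul_of_nonneg_left
            (frobNorm_proj_adjoint_le hadj hPsymm hPidem (fun X => (hRIP X).2) hδ0 hX) hα0
      _ ≤ 1 / (1 - δ) * ((1 + δ) * frobNorm Z) :=
          mul_le_mul_of_nonneg_right hα.2 (mul_nonneg (by linarith) (frobNorm_nonneg Z))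
      _ = (1 + δ) / (1 - δ) * frobNorm Z := by ring
  calc frobNorm (X - α • P (Astar (A X)))
      ≤ frobNorm (P X - α • P (Astar (A (P X))) - Z) + frobNorm (α • P (Astar (A Z))) :=
        hdecomp ▸ frobNorm_add_le _ _
    _ ≤ frobNorm (P X - α • P (Astar (A (P X)))) + frobNorm Z +
        α * frobNorm (P (Astar (A Z))) := by
        rw [frobNorm_smul, abs_of_nonneg hα0]
        linarith [frobNorm_sub_le (P X - α • P (Astar (A (P X)))) Z]
    _ ≤ 2 * δ / (1 - δ) * frobNorm X + (1 + (1 + δ) / (1 - δ)) * ε := by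
        have hK : 0 ≤ (1 + δ) / (1 - δ) := div_nonneg (by linarith) (by linarith)
        nlinarith

end GradientStep

theorem frobNorm_sub_le_of_frobNorm_sub_le {p q : ℕ} {W T T' : Matrix (Fin p) (Fin q) ℝ} {κ : ℝ}
    (h : frobNorm (W - T') ≤ κ * frobNorm (W - T)) :
    frobNorm (T' - T) ≤ (κ + 1) * frobNorm (W - T) :=
  calc frobNorm (T' - T) = frobNorm ((W - T) - (W - T')) := by rw [sub_sub_sub_cancel_left]
    _ ≤ frobNorm (W - T) + frobNorm (W - T') := frobNorm_sub_le _ _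
    _ ≤ (κ + 1) * frobNorm (W - T) := by linarith

theorem rgrad_one_step_contraction_general {n₁ n₂ m r : ℕ} {δ : ℝ} (hδ0 : 0 < δ) (hδ1 : δ < 1)
    (A : Matrix (Fin n₁) (Fin n₂) ℝ →ₗ[ℝ] EuclideanSpace ℝ (Fin m))
    (Astar : EuclideanSpace ℝ (Fin m) →ₗ[ℝ] Matrix (Fin n₁) (Fin n₂) ℝ)
    (hadj : ∀ (X : Matrix (Fin n₁) (Fin n₂) ℝ) (v : EuclideanSpace ℝ (Fin m)),
      ⟪A X, v⟫ = frobInner (Astar v) X)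
    (hRIP : ∀ X : Matrix (Fin n₁) (Fin n₂) ℝ, X.rank ≤ 2 * r →
      (1 - δ) * (frobNorm X) ^ 2 ≤ ‖A X‖ ^ 2 ∧ ‖A X‖ ^ 2 ≤ (1 + δ) * (frobNorm X) ^ 2)
    (U Ul : Matrix (Fin n₁) (Fin r) ℝ) (V Vl : Matrix (Fin n₂) (Fin r) ℝ)
    (C Cl : Matrix (Fin r) (Fin r) ℝ)
    (T Tl : Matrix (Fin n₁) (Fin n₂) ℝ)
    (hU : Uᵀ * U = 1) (hV : Vᵀ * V = 1) (hUl : Ulᵀ * Ul = 1) (hVl : Vlᵀ * Vl = 1)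
    (hT : T = U * C * Vᵀ) (hTl : Tl = Ul * Cl * Vlᵀ)
    (hrankT : T.rank = r)
    (σr : ℝ) (hσpos : 0 < σr)
    (hσ : ∀ v : Matrix (Fin r) (Fin 1) ℝ, σr * frobNorm v ≤ frobNorm (C * v))
    (y : EuclideanSpace ℝ (Fin m)) (hy : y = A T)
    (P : Matrix (Fin n₁) (Fin n₂) ℝ → Matrix (Fin n₁) (Fin n₂) ℝ)
    (hP : ∀ Z, P Z = Ul * Ulᵀ * Z + Z * (Vl * Vlᵀ) - Ul * Ulᵀ * Z * (Vl * Vlᵀ))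
    (G : Matrix (Fin n₁) (Fin n₂) ℝ) (hG : G = Astar (A Tl - y))
    (hAPG : A (P G) ≠ 0)
    (α : ℝ) (hα : α = (frobNorm (P G)) ^ 2 / ‖A (P G)‖ ^ 2)
    (W : Matrix (Fin n₁) (Fin n₂) ℝ) (hW : W = Tl - α • P G)
    (Tnext : Matrix (Fin n₁) (Fin n₂) ℝ)
    (hHr : frobNorm (W - Tnext) ≤ Real.sqrt 2 * frobNorm (W - T)) :
    frobNorm (Tnext - T) ≤
      (Real.sqrt 2 + 1) *
        (2 * δ / (1 - δ) + (1 + (1 + δ) / (1 - δ)) * frobNorm (T - Tl) / σr) *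
        frobNorm (Tl - T) := by
  obtain rfl : P = tangentProj Ul Vl := funext hP
  have hnormal : tangentProj Ul Vl (Tl - T) - (Tl - T) = T - tangentProj Ul Vl T := by
    rw [map_sub, hTl, tangentProj_mul_mul hUl hVl]
    abel
  have hrank : (T - tangentProj Ul Vl T).rank ≤ 2 * r := by
    rw [sub_tangentProj]
    exact (rank_mul_le_left _ _).trans ((rank_mul_le_right _ _).trans (by omega))
  have hRIPP := fun X => hRIP _ (rank_tangentProj_le Ul Vl X)
  have hαmem : α ∈ Set.Icc (1 / (1 + δ)) (1 / (1 - δ)) :=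
    hα ▸ div_mem_Icc_of_mem_Icc hδ0.le hδ1 (pow_pos (norm_pos_iff.mpr hAPG) 2) (hRIPP G)
  have hWT : W - T = (Tl - T) - α • tangentProj Ul Vl (Astar (A (Tl - T))) := by
    rw [hW, hG, hy, ← map_sub]
    abel
  have hstep := frobNorm_sub_smul_proj_adjoint_le hadj (frobInner_tangentProj Ul Vl)
    (tangentProj_idem hUl hVl) hRIPP hδ0.le hδ1 hαmem (hnormal ▸ (hRIP _ hrank).2)
    (hnormal ▸ frobNorm_sub_tangentProj_le hU hV hUl hVl hT hTl hσpos hσ)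
  rw [← hWT] at hstep
  calc frobNorm (Tnext - T) ≤ (Real.sqrt 2 + 1) * frobNorm (W - T) :=
        frobNorm_sub_le_of_frobNorm_sub_le hHr
    _ ≤ (Real.sqrt 2 + 1) * (2 * δ / (1 - δ) * frobNorm (Tl - T) +
          (1 + (1 + δ) / (1 - δ)) * (frobNorm (T - Tl) ^ 2 / σr)) :=
        mul_le_mul_of_nonneg_left hstep (by positivity)
    _ = _ := by rw [frobNorm_sub_comm T Tl]; ring

/-- one-step contraction of Riemannian gradient descent in the matrix case.
`A` satisfies the rank-`2r` RIP with constant `δ ∈ (0,1)`; `T = U C Vᵀ` has rank `r` with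
smallest nonzero singular value at least `σr > 0`; `T_l = U_l C_l V_lᵀ` is a rank-`r`
iterate with tangent-space projector `P`; `G` is the gradient, `α` the exact line-search
step size, and `Tnext = H_r(W)` satisfies the quasi-projection bound. -/
theorem rgrad_one_step_contraction {n₁ n₂ m r : ℕ} {δ : ℝ} (hδ0 : 0 < δ) (hδ1 : δ < 1)
    (A : Matrix (Fin n₁) (Fin n₂) ℝ →ₗ[ℝ] EuclideanSpace ℝ (Fin m))
    (Astar : EuclideanSpace ℝ (Fin m) →ₗ[ℝ] Matrix (Fin n₁) (Fin n₂) ℝ)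
    (hadj : ∀ (X : Matrix (Fin n₁) (Fin n₂) ℝ) (v : EuclideanSpace ℝ (Fin m)),
      ⟪A X, v⟫ = frobInner (Astar v) X)
    (hRIP : ∀ X : Matrix (Fin n₁) (Fin n₂) ℝ, X.rank ≤ 2 * r →
      (1 - δ) * (frobNorm X) ^ 2 ≤ ‖A X‖ ^ 2 ∧ ‖A X‖ ^ 2 ≤ (1 + δ) * (frobNorm X) ^ 2)
    (U Ul : Matrix (Fin n₁) (Fin r) ℝ) (V Vl : Matrix (Fin n₂) (Fin r) ℝ)
    (C Cl : Matrix (Fin r) (Fin r) ℝ)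
    (T Tl : Matrix (Fin n₁) (Fin n₂) ℝ)
    (hU : Uᵀ * U = 1) (hV : Vᵀ * V = 1) (hUl : Ulᵀ * Ul = 1) (hVl : Vlᵀ * Vl = 1)
    (hT : T = U * C * Vᵀ) (hTl : Tl = Ul * Cl * Vlᵀ)
    (hrankT : T.rank = r) (hrankTl : Tl.rank = r)
    (σr : ℝ) (hσpos : 0 < σr)
    (hσ : ∀ v : Matrix (Fin r) (Fin 1) ℝ, σr * frobNorm v ≤ frobNorm (C * v))
    (y : EuclideanSpace ℝ (Fin m)) (hy : y = A T)
    (P : Matrix (Fin n₁) (Fin n₂) ℝ → Matrix (Fin n₁) (Fin n₂) ℝ)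
    (hP : ∀ Z, P Z = Ul * Ulᵀ * Z + Z * (Vl * Vlᵀ) - Ul * Ulᵀ * Z * (Vl * Vlᵀ))
    (G : Matrix (Fin n₁) (Fin n₂) ℝ) (hG : G = Astar (A Tl - y))
    (hAPG : A (P G) ≠ 0)
    (α : ℝ) (hα : α = (frobNorm (P G)) ^ 2 / ‖A (P G)‖ ^ 2)
    (W : Matrix (Fin n₁) (Fin n₂) ℝ) (hW : W = Tl - α • P G)
    (Tnext : Matrix (Fin n₁) (Fin n₂) ℝ)
    (hHr : frobNorm (W - Tnext) ≤ Real.sqrt 2 * frobNorm (W - T)) :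
    frobNorm (Tnext - T) ≤
      (Real.sqrt 2 + 1) *
        (2 * δ / (1 - δ) + (1 + (1 + δ) / (1 - δ)) * frobNorm (T - Tl) / σr) *
        frobNorm (Tl - T) :=
  rgrad_one_step_contraction_general hδ0 hδ1 A Astar hadj hRIP U Ul V Vl C Cl T Tl hU hV hUl hVl hT
    hTl hrankT σr hσpos hσ y hy P hP G hG hAPG α hα W hW Tnext hHr
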